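/- Let y = Ax + e where A ∈ ℝ^{m×n} (m ≤ n) has largest singular value σ₁, smallest singular value σ_m, and restricted isometry constant δ_{3k} of order 3k; x ∈ ℝⁿ is a nonnegative k-sparse vector and e ∈ ℝ^m. Let ε > 0 and 0 < λ ≤ σ_m² + ε. Let x⁽ᵖ⁾ ∈ ℝⁿ be any k-sparse vector, set u := x⁽ᵖ⁾ + λ(AᵀA + εI)⁻¹Aᵀ(y − Ax⁽ᵖ⁾) and x⁽ᵖ⁺¹⁾ := H_k(u⁺). Then ‖x⁽ᵖ⁺¹⁾ − x‖₂ ≤ α‖x⁽ᵖ⁾ − x‖₂ + γ‖e‖₂, where α := φ(δ_{3k} + σ₁² − λσ₁²/(σ₁² + ε)), γ := φλσ₁/(σ_m² + ε), and φ = (√5 + 1)/2 is the golden ratio. -/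

import Mathlib

open Matrix

/-- The Euclidean (ℓ₂) norm of a vector in ℝ^d. -/
noncomputable def l2 {d : ℕ} (v : Fin d → ℝ) : ℝ := Real.sqrt (∑ i, v i ^ 2)


lemma l2_nonneg {d : ℕ} (v : Fin d → ℝ) : 0 ≤ l2 v := Real.sqrt_nonneg _

lemma l2_sq {d : ℕ} (v : Fin d → ℝ) : l2 v ^ 2 = ∑ i, v i ^ 2 :=
  Real.sq_sqrt (by positivity)

lemma l2_eq_norm {d : ℕ} (v : Fin d → ℝ) :
    l2 v = ‖(WithLp.equiv 2 (Fin d → ℝ)).symm v‖ := by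
  rw [EuclideanSpace.norm_eq]
  unfold l2
  congr 1
  apply Finset.sum_congr rfl
  intro i _
  simp [Real.norm_eq_abs, sq_abs]

lemma l2_triangle {d : ℕ} (a b : Fin d → ℝ) : l2 (a + b) ≤ l2 a + l2 b := by
  simp only [l2_eq_norm]
  have : (WithLp.equiv 2 (Fin d → ℝ)).symm (a + b)
      = (WithLp.equiv 2 (Fin d → ℝ)).symm a + (WithLp.equiv 2 (Fin d → ℝ)).symm b := rfl
  rw [this]
  exact norm_add_le _ _

lemma l2_smul {d : ℕ} (c : ℝ) (v : Fin d → ℝ) : l2 (c • v) = |c| * l2 v := by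
  simp only [l2_eq_norm]
  have : (WithLp.equiv 2 (Fin d → ℝ)).symm (c • v)
      = c • (WithLp.equiv 2 (Fin d → ℝ)).symm v := rfl
  rw [this, norm_smul, Real.norm_eq_abs]

lemma l2_mono {d : ℕ} {a b : Fin d → ℝ} (h : ∀ i, a i ^ 2 ≤ b i ^ 2) : l2 a ≤ l2 b :=
  Real.sqrt_le_sqrt (Finset.sum_le_sum fun i _ => h i)

lemma le_of_sq_le_sq' {a b : ℝ} (ha : 0 ≤ a) (hb : 0 ≤ b) (h : a ^ 2 ≤ b ^ 2) : a ≤ b := by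
  nlinarith

lemma l2_sq_le {d : ℕ} {a : Fin d → ℝ} {c : ℝ} (hc : 0 ≤ c)
    (h : l2 a ^ 2 ≤ c ^ 2) : l2 a ≤ c := le_of_sq_le_sq' (l2_nonneg a) hc h

lemma dot_self_eq_l2_sq {d : ℕ} (v : Fin d → ℝ) : v ⬝ᵥ v = l2 v ^ 2 := by
  rw [l2_sq]
  simp [dotProduct, sq]

@[simp] lemma l2_zero {d : ℕ} : l2 (0 : Fin d → ℝ) = 0 := by simp [l2]

lemma l2_eq_zero {d : ℕ} {v : Fin d → ℝ} (h : l2 v = 0) : v = 0 := by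
  have h2 : ∑ i, v i ^ 2 = 0 := by
    have := l2_sq v; rw [h] at this; linarith [this.symm]
  funext i
  have : v i ^ 2 = 0 := by
    have hle : v i ^ 2 ≤ 0 := by
      rw [← h2]
      exact Finset.single_le_sum (f := fun i => v i ^ 2) (fun j _ => sq_nonneg _) (Finset.mem_univ i)
    nlinarith [sq_nonneg (v i)]
  exact pow_eq_zero_iff (by norm_num) |>.mp this

/-- The restricted isometry constant of order `k` of a matrix `A`: the smallest `δ ≥ 0`
such that `(1 - δ)‖x‖² ≤ ‖Ax‖² ≤ (1 + δ)‖x‖²` for all `k`-sparse vectors `x`. -/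
noncomputable def RIC {m n : ℕ} (A : Matrix (Fin m) (Fin n) ℝ) (k : ℕ) : ℝ :=
  sInf {δ : ℝ | 0 ≤ δ ∧ ∀ x : Fin n → ℝ, (Function.support x).ncard ≤ k →
    (1 - δ) * l2 x ^ 2 ≤ l2 (A *ᵥ x) ^ 2 ∧ l2 (A *ᵥ x) ^ 2 ≤ (1 + δ) * l2 x ^ 2}
section RIC

variable {m n : ℕ} (A : Matrix (Fin m) (Fin n) ℝ) (K : ℕ)

lemma RIC_set_nonempty :
    {δ : ℝ | 0 ≤ δ ∧ ∀ x : Fin n → ℝ, (Function.support x).ncard ≤ K →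
      (1 - δ) * l2 x ^ 2 ≤ l2 (A *ᵥ x) ^ 2 ∧ l2 (A *ᵥ x) ^ 2 ≤ (1 + δ) * l2 x ^ 2}.Nonempty := by
  classical
  set C : ℝ := ∑ i, ∑ j, (A i j) ^ 2 with hC
  have hC0 : 0 ≤ C := Finset.sum_nonneg fun i _ => Finset.sum_nonneg fun j _ => sq_nonneg _
  refine ⟨1 + C, by linarith, fun x _ => ?_⟩
  have hbound : l2 (A *ᵥ x) ^ 2 ≤ C * l2 x ^ 2 := by
    rw [l2_sq, l2_sq, hC, Finset.sum_mul]
    apply Finset.sum_le_sum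
    intro i _
    calc (A *ᵥ x) i ^ 2 = (∑ j, A i j * x j) ^ 2 := by rfl
      _ ≤ (∑ j, (A i j) ^ 2) * ∑ j, x j ^ 2 :=
          Finset.sum_mul_sq_le_sq_mul_sq Finset.univ (fun j => A i j) x
  constructor
  · have : (1 - (1 + C)) * l2 x ^ 2 ≤ 0 := by nlinarith [sq_nonneg (l2 x)]
    nlinarith [sq_nonneg (l2 (A *ᵥ x))]
  · nlinarith [sq_nonneg (l2 x)]

lemma RIC_nonneg : 0 ≤ RIC A K :=
  le_csInf (RIC_set_nonempty A K) fun _ hb => hb.1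

lemma RIC_spec : ∀ x : Fin n → ℝ, (Function.support x).ncard ≤ K →
    (1 - RIC A K) * l2 x ^ 2 ≤ l2 (A *ᵥ x) ^ 2 ∧
      l2 (A *ᵥ x) ^ 2 ≤ (1 + RIC A K) * l2 x ^ 2 := by
  intro x hx
  set δ := RIC A K with hδ
  have hδ0 : (0:ℝ) ≤ δ := RIC_nonneg A K
  constructor
  · by_contra hcon
    push_neg at hcon
    have hx2 : 0 < l2 x ^ 2 := by
      nlinarith [sq_nonneg (l2 x), sq_nonneg (l2 (A *ᵥ x))]
    set η : ℝ := ((1 - δ) * l2 x ^ 2 - l2 (A *ᵥ x) ^ 2) / l2 x ^ 2 with hη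
    have hη0 : 0 < η := div_pos (by linarith) hx2
    obtain ⟨δ', hδ'mem, hδ'lt⟩ := Real.lt_sInf_add_pos (RIC_set_nonempty A K) hη0
    have h1 := (hδ'mem.2 x hx).1
    have : δ' < δ + η := hδ'lt
    have hgoal : (1 - δ - η) * l2 x ^ 2 < (1 - δ') * l2 x ^ 2 := by nlinarith
    have : η * l2 x ^ 2 = (1 - δ) * l2 x ^ 2 - l2 (A *ᵥ x) ^ 2 := by
      rw [hη]; exact div_mul_cancel₀ _ (ne_of_gt hx2)
    nlinarith
  · by_contra hcon
    push_neg at hcon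
    have hx2 : 0 < l2 x ^ 2 := by
      rcases lt_or_eq_of_le (sq_nonneg (l2 x)) with h | h
      · exact h
      · exfalso
        have hx0 : x = 0 := l2_eq_zero (by nlinarith [l2_nonneg x])
        rw [hx0, Matrix.mulVec_zero] at hcon
        have : l2 (0 : Fin m → ℝ) = 0 := by
          simp [l2]
        rw [hx0] at h
        nlinarith
    set η : ℝ := (l2 (A *ᵥ x) ^ 2 - (1 + δ) * l2 x ^ 2) / l2 x ^ 2 with hη
    have hη0 : 0 < η := div_pos (by linarith) hx2
    obtain ⟨δ', hδ'mem, hδ'lt⟩ := Real.lt_sInf_add_pos (RIC_set_nonempty A K) hη0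
    have h1 := (hδ'mem.2 x hx).2
    have : δ' < δ + η := hδ'lt
    have : η * l2 x ^ 2 = l2 (A *ᵥ x) ^ 2 - (1 + δ) * l2 x ^ 2 := by
      rw [hη]; exact div_mul_cancel₀ _ (ne_of_gt hx2)
    nlinarith

lemma RIC_abs {x : Fin n → ℝ} (hx : (Function.support x).ncard ≤ K) :
    |l2 x ^ 2 - l2 (A *ᵥ x) ^ 2| ≤ RIC A K * l2 x ^ 2 := by
  obtain ⟨h1, h2⟩ := RIC_spec A K x hx
  rw [abs_le]
  constructor <;> nlinarith

end RIC

section RIP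

variable {m n : ℕ}

/-- The RIP bilinear form. -/
noncomputable def Bf (A : Matrix (Fin m) (Fin n) ℝ) (p q : Fin n → ℝ) : ℝ :=
  p ⬝ᵥ q - (A *ᵥ p) ⬝ᵥ (A *ᵥ q)

variable (A : Matrix (Fin m) (Fin n) ℝ)

lemma Bf_self (p : Fin n → ℝ) : Bf A p p = l2 p ^ 2 - l2 (A *ᵥ p) ^ 2 := by
  rw [Bf, dot_self_eq_l2_sq, dot_self_eq_l2_sq]

lemma Bf_comm (p q : Fin n → ℝ) : Bf A p q = Bf A q p := by
  rw [Bf, Bf, dotProduct_comm, dotProduct_comm (A *ᵥ p)]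

lemma Bf_add_left (p q r : Fin n → ℝ) : Bf A (p + q) r = Bf A p r + Bf A q r := by
  simp [Bf, Matrix.mulVec_add, add_dotProduct]
  ring

lemma Bf_smul_left (c : ℝ) (p r : Fin n → ℝ) : Bf A (c • p) r = c * Bf A p r := by
  simp [Bf, Matrix.mulVec_smul, smul_dotProduct, smul_eq_mul]
  ring

lemma Bf_smul_right (c : ℝ) (p r : Fin n → ℝ) : Bf A p (c • r) = c * Bf A p r := by
  rw [Bf_comm, Bf_smul_left, Bf_comm]

lemma Bf_expand_add (p q : Fin n → ℝ) :
    Bf A (p + q) (p + q) = Bf A p p + 2 * Bf A p q + Bf A q q := by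
  rw [Bf_add_left, Bf_comm A p (p + q), Bf_comm A q (p + q), Bf_add_left, Bf_add_left,
    Bf_comm A p q]
  ring

lemma Bf_expand_sub (p q : Fin n → ℝ) :
    Bf A (p - q) (p - q) = Bf A p p - 2 * Bf A p q + Bf A q q := by
  have h : p - q = p + (-1 : ℝ) • q := by funext i; simp; ring
  rw [h, Bf_expand_add, Bf_smul_left, Bf_smul_right, Bf_smul_right]
  ring

lemma l2_parallelogram (p q : Fin n → ℝ) :
    l2 (p + q) ^ 2 + l2 (p - q) ^ 2 = 2 * l2 p ^ 2 + 2 * l2 q ^ 2 := by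
  simp only [l2_sq]
  rw [Finset.mul_sum, Finset.mul_sum, ← Finset.sum_add_distrib, ← Finset.sum_add_distrib]
  apply Finset.sum_congr rfl
  intro i _
  simp only [Pi.add_apply, Pi.sub_apply]
  ring

lemma Bf_polar_bound (K : ℕ) (U : Set (Fin n)) (hU : U.ncard ≤ K) {p q : Fin n → ℝ}
    (hp : Function.support p ⊆ U) (hq : Function.support q ⊆ U) :
    |Bf A p q| ≤ RIC A K / 2 * (l2 p ^ 2 + l2 q ^ 2) := by
  have hfin : U.Finite := Set.toFinite U
  have hsum : Function.support (p + q) ⊆ U :=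
    (Function.support_add p q).trans (Set.union_subset hp hq)
  have hsub : Function.support (p - q) ⊆ U :=
    (Function.support_sub p q).trans (Set.union_subset hp hq)
  have h1 : |Bf A (p + q) (p + q)| ≤ RIC A K * l2 (p + q) ^ 2 := by
    rw [Bf_self]
    exact RIC_abs A K ((Set.ncard_le_ncard hsum hfin).trans hU)
  have h2 : |Bf A (p - q) (p - q)| ≤ RIC A K * l2 (p - q) ^ 2 := by
    rw [Bf_self]
    exact RIC_abs A K ((Set.ncard_le_ncard hsub hfin).trans hU)
  have hexp1 := Bf_expand_add A p q
  have hexp2 := Bf_expand_sub A p q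
  have hpar := l2_parallelogram p q
  rw [abs_le] at h1 h2 ⊢
  have hmul : RIC A K * (l2 (p + q) ^ 2 + l2 (p - q) ^ 2)
      = RIC A K * (2 * l2 p ^ 2 + 2 * l2 q ^ 2) := by rw [hpar]
  constructor
  · linarith [h1.1, h2.2]
  · linarith [h1.2, h2.1]

lemma Bf_scaled_bound (K : ℕ) (U : Set (Fin n)) (hU : U.ncard ≤ K) {p q : Fin n → ℝ}
    (hp : Function.support p ⊆ U) (hq : Function.support q ⊆ U) :
    |Bf A p q| ≤ RIC A K * l2 p * l2 q := by
  rcases eq_or_lt_of_le (l2_nonneg p) with h0p | h0p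
  · have hp0 : p = 0 := l2_eq_zero h0p.symm
    subst hp0
    have hB0 : Bf A 0 q = 0 := by simp [Bf]
    rw [hB0, l2_zero, abs_zero, mul_zero, zero_mul]
  rcases eq_or_lt_of_le (l2_nonneg q) with h0q | h0q
  · have hq0 : q = 0 := l2_eq_zero h0q.symm
    subst hq0
    have hB0 : Bf A p 0 = 0 := by simp [Bf]
    rw [hB0, l2_zero, abs_zero, mul_zero]
  set r : ℝ := Real.sqrt (l2 p / l2 q) with hr
  have hr0 : 0 < r := Real.sqrt_pos.mpr (div_pos h0p h0q)
  have hr2 : r ^ 2 = l2 p / l2 q := Real.sq_sqrt (le_of_lt (div_pos h0p h0q))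
  have hBpq : Bf A p q = Bf A (r⁻¹ • p) (r • q) := by
    rw [Bf_smul_left, Bf_smul_right]
    field_simp
  have hsp : Function.support (r⁻¹ • p) ⊆ U :=
    (Function.support_const_smul_subset r⁻¹ p).trans hp
  have hsq : Function.support (r • q) ⊆ U :=
    (Function.support_const_smul_subset r q).trans hq
  have hb := Bf_polar_bound A K U hU hsp hsq
  rw [← hBpq] at hb
  have e1 : l2 (r⁻¹ • p) ^ 2 = r⁻¹ ^ 2 * l2 p ^ 2 := by
    rw [l2_smul, abs_of_pos (by positivity : (0:ℝ) < r⁻¹)]; ring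
  have e2 : l2 (r • q) ^ 2 = r ^ 2 * l2 q ^ 2 := by
    rw [l2_smul, abs_of_pos hr0]; ring
  have hval : l2 (r⁻¹ • p) ^ 2 + l2 (r • q) ^ 2 = 2 * (l2 p * l2 q) := by
    rw [e1, e2, hr2]
    have hinv : r⁻¹ ^ 2 = l2 q / l2 p := by
      rw [inv_pow, hr2]
      rw [inv_div]
    rw [hinv]
    field_simp
    ring
  calc |Bf A p q| ≤ RIC A K / 2 * (l2 (r⁻¹ • p) ^ 2 + l2 (r • q) ^ 2) := hb
    _ = RIC A K * l2 p * l2 q := by rw [hval]; ring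

lemma rip_bound (K : ℕ) (Ω : Set (Fin n)) (v : Fin n → ℝ)
    (h : (Ω ∪ Function.support v).ncard ≤ K) :
    l2 (Ω.indicator (v - Aᵀ *ᵥ (A *ᵥ v))) ≤ RIC A K * l2 v := by
  classical
  set w := Ω.indicator (v - Aᵀ *ᵥ (A *ᵥ v)) with hw
  have hsw : Function.support w ⊆ Ω ∪ Function.support v :=
    (Set.support_indicator_subset).trans (Set.subset_union_left)
  have hsv : Function.support v ⊆ Ω ∪ Function.support v := Set.subset_union_right
  have hkey : l2 w ^ 2 = Bf A w v := by
    have h1 : l2 w ^ 2 = w ⬝ᵥ (v - Aᵀ *ᵥ (A *ᵥ v)) := by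
      rw [l2_sq, dotProduct]
      apply Finset.sum_congr rfl
      intro i _
      by_cases hi : i ∈ Ω
      · rw [hw]; simp [Set.indicator_of_mem hi]; ring
      · rw [hw]; simp [Set.indicator_of_notMem hi]
    rw [h1, dotProduct_sub, Bf]
    congr 1
    rw [dotProduct_mulVec, vecMul_transpose, dotProduct_mulVec, ← dotProduct_mulVec]
  have hb := Bf_scaled_bound A K _ h hsw hsv
  rw [← hkey] at hb
  have hb' : l2 w ^ 2 ≤ RIC A K * l2 w * l2 v := le_trans (le_abs_self _) hb
  rcases eq_or_lt_of_le (l2_nonneg w) with h0 | h0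
  · rw [← h0]
    exact mul_nonneg (RIC_nonneg A K) (l2_nonneg v)
  · nlinarith

end RIP

section Golden

variable {n : ℕ}

lemma sum_ite_sq_eq (F : Finset (Fin n)) (p : Fin n → ℝ) :
    ∑ i, (if i ∈ F then p i else 0) ^ 2 = ∑ i ∈ F, p i ^ 2 := by
  have h1 : ∀ i, (if i ∈ F then p i else 0) ^ 2 = if i ∈ F then p i ^ 2 else 0 := by
    intro i; by_cases hi : i ∈ F <;> simp [hi]
  simp_rw [h1]
  rw [Finset.sum_ite_mem, Finset.univ_inter]

lemma sqrt_sum_sq_triangle (F : Finset (Fin n)) (p q : Fin n → ℝ) :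
    Real.sqrt (∑ i ∈ F, (p i + q i) ^ 2) ≤
      Real.sqrt (∑ i ∈ F, p i ^ 2) + Real.sqrt (∑ i ∈ F, q i ^ 2) := by
  classical
  set p' : Fin n → ℝ := fun i => if i ∈ F then p i else 0
  set q' : Fin n → ℝ := fun i => if i ∈ F then q i else 0
  have h1 : l2 (p' + q') ≤ l2 p' + l2 q' := l2_triangle p' q'
  have e0 : l2 (p' + q') = Real.sqrt (∑ i ∈ F, (p i + q i) ^ 2) := by
    rw [l2, ← sum_ite_sq_eq F (fun i => p i + q i)]
    congr 1
    apply Finset.sum_congr rfl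
    intro i _
    by_cases hi : i ∈ F <;> simp [p', q', hi]
  have e1 : l2 p' = Real.sqrt (∑ i ∈ F, p i ^ 2) := by rw [l2, sum_ite_sq_eq]
  have e2 : l2 q' = Real.sqrt (∑ i ∈ F, q i ^ 2) := by rw [l2, sum_ite_sq_eq]
  rw [e0, e1, e2] at h1
  exact h1

lemma sq_sum_mono_inj {S T : Finset (Fin n)} (w : Fin n → ℝ)
    (hcard : (S \ T).card ≤ (T \ S).card)
    (hdom : ∀ i ∈ T, ∀ j ∉ T, |w j| ≤ |w i|) :
    ∑ i ∈ S \ T, w i ^ 2 ≤ ∑ i ∈ T \ S, w i ^ 2 := by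
  classical
  have hcard' : Fintype.card ↥(S \ T : Finset (Fin n)) ≤ Fintype.card ↥(T \ S : Finset (Fin n)) := by
    rw [Fintype.card_coe, Fintype.card_coe]
    exact hcard
  obtain ⟨f⟩ := Function.Embedding.nonempty_of_card_le hcard'
  calc ∑ i ∈ S \ T, w i ^ 2 = ∑ i ∈ (S \ T).attach, w i.1 ^ 2 := (Finset.sum_attach _ _).symm
    _ ≤ ∑ i ∈ (S \ T).attach, w (f i).1 ^ 2 := by
        apply Finset.sum_le_sum
        intro i _
        have hi : (i : Fin n) ∉ T := (Finset.mem_sdiff.mp i.2).2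
        have hfi : ((f i : ↥(T \ S : Finset (Fin n))) : Fin n) ∈ T :=
          (Finset.mem_sdiff.mp (f i).2).1
        have habs := hdom _ hfi _ hi
        nlinarith [sq_abs (w i.1), sq_abs (w (f i).1), abs_nonneg (w i.1)]
    _ = ∑ j ∈ (S \ T).attach.image (fun i => ((f i : ↥(T \ S : Finset (Fin n))) : Fin n)),
          w j ^ 2 := by
        rw [Finset.sum_image]
        intro x _ y _ hxy
        exact f.injective (Subtype.ext hxy)
    _ ≤ ∑ j ∈ T \ S, w j ^ 2 := by
        apply Finset.sum_le_sum_of_subset_of_nonneg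
        · intro j hj
          obtain ⟨i, _, rfl⟩ := Finset.mem_image.mp hj
          exact (f i).2
        · intro j _ _
          exact sq_nonneg _

lemma golden_aux (w xv : Fin n → ℝ) (S T : Finset (Fin n))
    (hS : ∀ i, i ∉ S → xv i = 0)
    (hcard : (S \ T).card ≤ (T \ S).card)
    (hdom : ∀ i ∈ T, ∀ j ∉ T, |w j| ≤ |w i|) :
    l2 ((fun i => if i ∈ T then w i else 0) - xv) ≤
      (Real.sqrt 5 + 1) / 2 * l2 (fun i => if i ∈ T ∪ S then w i - xv i else 0) := by
  classical
  obtain ⟨a, ha0, ha2⟩ : ∃ a : ℝ, 0 ≤ a ∧ a ^ 2 = ∑ i ∈ T \ S, w i ^ 2 :=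
    ⟨Real.sqrt _, Real.sqrt_nonneg _, Real.sq_sqrt (Finset.sum_nonneg fun i _ => sq_nonneg _)⟩
  obtain ⟨b, hb0, hb2⟩ : ∃ b : ℝ, 0 ≤ b ∧ b ^ 2 = ∑ i ∈ S \ T, (w i - xv i) ^ 2 :=
    ⟨Real.sqrt _, Real.sqrt_nonneg _, Real.sq_sqrt (Finset.sum_nonneg fun i _ => sq_nonneg _)⟩
  obtain ⟨c, hc0, hc2⟩ : ∃ c : ℝ, 0 ≤ c ∧ c ^ 2 = ∑ i ∈ T ∩ S, (w i - xv i) ^ 2 :=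
    ⟨Real.sqrt _, Real.sqrt_nonneg _, Real.sq_sqrt (Finset.sum_nonneg fun i _ => sq_nonneg _)⟩
  obtain ⟨X, hX0, hX2⟩ : ∃ X : ℝ, 0 ≤ X ∧ X ^ 2 = ∑ i ∈ S \ T, xv i ^ 2 :=
    ⟨Real.sqrt _, Real.sqrt_nonneg _, Real.sq_sqrt (Finset.sum_nonneg fun i _ => sq_nonneg _)⟩
  have hsplitT : ∀ (g : Fin n → ℝ), ∑ i ∈ T, g i = ∑ i ∈ T \ S, g i + ∑ i ∈ T ∩ S, g i := by
    intro g
    rw [← Finset.sum_union (Finset.sdiff_disjoint.mono_right Finset.inter_subset_right)]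
    apply Finset.sum_congr _ (fun _ _ => rfl)
    ext i
    simp only [Finset.mem_sdiff, Finset.mem_inter, Finset.mem_union]
    tauto
  have hTsum : ∑ i ∈ T, (w i - xv i) ^ 2 = a ^ 2 + c ^ 2 := by
    rw [hsplitT (fun i => (w i - xv i) ^ 2), ha2, hc2]
    congr 1
    apply Finset.sum_congr rfl
    intro i hi
    rw [hS i (Finset.mem_sdiff.mp hi).2, sub_zero]
  -- LHS squared
  have hLHS : l2 ((fun i => if i ∈ T then w i else 0) - xv) ^ 2
      = a ^ 2 + c ^ 2 + X ^ 2 := by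
    rw [l2_sq, hX2]
    have key0 : ∀ i, ((fun i => if i ∈ T then w i else 0) - xv) i ^ 2
        = if i ∈ T then (w i - xv i) ^ 2 else xv i ^ 2 := by
      intro i
      by_cases hi : i ∈ T
      · simp [hi]
      · simp [hi, zero_sub, neg_sq]
    simp_rw [key0]
    rw [Finset.sum_ite, Finset.filter_univ_mem, hTsum]
    congr 1
    symm
    apply Finset.sum_subset
    · intro i hi
      simp only [Finset.mem_filter, Finset.mem_univ, true_and]
      exact (Finset.mem_sdiff.mp hi).2
    · intro i hi1 hi2
      simp only [Finset.mem_filter, Finset.mem_univ, true_and] at hi1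
      by_cases hiS : i ∈ S
      · exact absurd (Finset.mem_sdiff.mpr ⟨hiS, hi1⟩) hi2
      · rw [hS i hiS]
        ring
  -- RHS squared
  have hRHS : l2 (fun i => if i ∈ T ∪ S then w i - xv i else 0) ^ 2
      = a ^ 2 + b ^ 2 + c ^ 2 := by
    rw [l2_sq, sum_ite_sq_eq (T ∪ S) (fun i => w i - xv i),
      ← Finset.union_sdiff_self_eq_union, Finset.sum_union Finset.disjoint_sdiff, hTsum, ← hb2]
    ring
  -- bound the tail
  have hX : X ≤ a + b := by
    have htri : Real.sqrt (∑ i ∈ S \ T, xv i ^ 2)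
        ≤ Real.sqrt (∑ i ∈ S \ T, (xv i - w i) ^ 2) + Real.sqrt (∑ i ∈ S \ T, w i ^ 2) := by
      have := sqrt_sum_sq_triangle (S \ T) (fun i => xv i - w i) w
      simpa using this
    have eX : Real.sqrt (∑ i ∈ S \ T, xv i ^ 2) = X := by
      rw [← hX2, Real.sqrt_sq hX0]
    have e1 : Real.sqrt (∑ i ∈ S \ T, (xv i - w i) ^ 2) = b := by
      have : ∑ i ∈ S \ T, (xv i - w i) ^ 2 = ∑ i ∈ S \ T, (w i - xv i) ^ 2 :=
        Finset.sum_congr rfl fun i _ => by ring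
      rw [this, ← hb2, Real.sqrt_sq hb0]
    have e2 : Real.sqrt (∑ i ∈ S \ T, w i ^ 2) ≤ a := by
      have h := Real.sqrt_le_sqrt (sq_sum_mono_inj w hcard hdom)
      rw [← ha2, Real.sqrt_sq ha0] at h
      exact h
    rw [eX, e1] at htri
    linarith
  -- golden ratio arithmetic
  have h5 : Real.sqrt 5 ^ 2 = 5 := Real.sq_sqrt (by norm_num)
  have h5n : 0 ≤ Real.sqrt 5 := Real.sqrt_nonneg 5
  have h52 : (2:ℝ) ≤ Real.sqrt 5 := by nlinarith
  have hfact : 2 * (Real.sqrt 5 - 1) * (((Real.sqrt 5 + 1) / 2) ^ 2 * (a ^ 2 + b ^ 2 + c ^ 2)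
      - (2 * a ^ 2 + 2 * a * b + b ^ 2 + c ^ 2))
      = ((Real.sqrt 5 - 1) * a - 2 * b) ^ 2 + 4 * c ^ 2 := by
    linear_combination (((Real.sqrt 5 - 1) * a ^ 2 + (Real.sqrt 5 + 1) * b ^ 2
      + (Real.sqrt 5 + 1) * c ^ 2) / 2) * h5
  have hQ : 2 * a ^ 2 + 2 * a * b + b ^ 2 + c ^ 2
      ≤ ((Real.sqrt 5 + 1) / 2) ^ 2 * (a ^ 2 + b ^ 2 + c ^ 2) := by
    nlinarith [hfact, sq_nonneg ((Real.sqrt 5 - 1) * a - 2 * b), sq_nonneg c, h52]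
  have hmain : l2 ((fun i => if i ∈ T then w i else 0) - xv) ^ 2
      ≤ ((Real.sqrt 5 + 1) / 2) ^ 2 * l2 (fun i => if i ∈ T ∪ S then w i - xv i else 0) ^ 2 := by
    rw [hLHS, hRHS]
    nlinarith [hX, hQ, hX0, ha0, hb0]
  have hphi : (0:ℝ) ≤ (Real.sqrt 5 + 1) / 2 := by linarith
  apply le_of_sq_le_sq' (l2_nonneg _) (mul_nonneg hphi (l2_nonneg _))
  calc l2 ((fun i => if i ∈ T then w i else 0) - xv) ^ 2
      ≤ ((Real.sqrt 5 + 1) / 2) ^ 2 * l2 (fun i => if i ∈ T ∪ S then w i - xv i else 0) ^ 2 :=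
        hmain
    _ = ((Real.sqrt 5 + 1) / 2 * l2 (fun i => if i ∈ T ∪ S then w i - xv i else 0)) ^ 2 := by
        ring

end Golden

section Spectral

variable {d : ℕ}

lemma mulVec_diag (c z : Fin d → ℝ) : Matrix.diagonal c *ᵥ z = fun i => c i * z i := by
  funext i
  rw [Matrix.mulVec_diagonal]

lemma cjd_mulVec (U : Matrix (Fin d) (Fin d) ℝ) (c : Fin d → ℝ) (v : Fin d → ℝ) :
    (U * Matrix.diagonal c * Uᵀ) *ᵥ v = U *ᵥ (fun i => c i * (Uᵀ *ᵥ v) i) := by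
  rw [← Matrix.mulVec_mulVec, ← Matrix.mulVec_mulVec, mulVec_diag]

lemma l2_orth {U : Matrix (Fin d) (Fin d) ℝ} (hU : Uᵀ * U = 1) (w : Fin d → ℝ) :
    l2 (U *ᵥ w) = l2 w := by
  have h : (U *ᵥ w) ⬝ᵥ (U *ᵥ w) = w ⬝ᵥ w := by
    rw [dotProduct_mulVec, ← Matrix.mulVec_transpose, Matrix.mulVec_mulVec, hU, Matrix.one_mulVec]
  have h2 : l2 (U *ᵥ w) ^ 2 = l2 w ^ 2 := by
    rw [← dot_self_eq_l2_sq, ← dot_self_eq_l2_sq, h]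
  calc l2 (U *ᵥ w) = Real.sqrt (l2 (U *ᵥ w) ^ 2) := (Real.sqrt_sq (l2_nonneg _)).symm
    _ = Real.sqrt (l2 w ^ 2) := by rw [h2]
    _ = l2 w := Real.sqrt_sq (l2_nonneg _)

lemma dot_cjd_mulVec {U : Matrix (Fin d) (Fin d) ℝ} (c : Fin d → ℝ) (w : Fin d → ℝ) :
    w ⬝ᵥ ((U * Matrix.diagonal c * Uᵀ) *ᵥ w) = ∑ i, c i * (Uᵀ *ᵥ w) i ^ 2 := by
  rw [cjd_mulVec, dotProduct_mulVec, ← Matrix.mulVec_transpose]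
  rw [dotProduct]
  apply Finset.sum_congr rfl
  intro i _
  ring

lemma l2_cjd_mulVec_le {U : Matrix (Fin d) (Fin d) ℝ} (hUl : Uᵀ * U = 1) (hUr : U * Uᵀ = 1)
    (c : Fin d → ℝ) {t : ℝ} (ht : 0 ≤ t) (hc : ∀ i, |c i| ≤ t) (v : Fin d → ℝ) :
    l2 ((U * Matrix.diagonal c * Uᵀ) *ᵥ v) ≤ t * l2 v := by
  rw [cjd_mulVec, l2_orth hUl]
  have hUt : Uᵀᵀ * Uᵀ = 1 := by rw [Matrix.transpose_transpose, hUr]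
  have hv' : l2 (Uᵀ *ᵥ v) = l2 v := l2_orth hUt v
  apply le_of_sq_le_sq' (l2_nonneg _) (mul_nonneg ht (l2_nonneg _))
  rw [l2_sq]
  calc ∑ i, (c i * (Uᵀ *ᵥ v) i) ^ 2 ≤ ∑ i, t ^ 2 * (Uᵀ *ᵥ v) i ^ 2 := by
        apply Finset.sum_le_sum
        intro i _
        have h1 : c i ^ 2 ≤ t ^ 2 := by
          nlinarith [sq_abs (c i), abs_nonneg (c i), hc i]
        nlinarith [h1, sq_nonneg ((Uᵀ *ᵥ v) i)]
    _ = t ^ 2 * l2 (Uᵀ *ᵥ v) ^ 2 := by rw [l2_sq, Finset.mul_sum]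
    _ = (t * l2 v) ^ 2 := by rw [hv']; ring
  
lemma herm_decomp {B : Matrix (Fin d) (Fin d) ℝ} (hB : B.IsHermitian) :
    ∃ (U : Matrix (Fin d) (Fin d) ℝ) (s : Fin d → ℝ),
      Uᵀ * U = 1 ∧ U * Uᵀ = 1 ∧ B = U * Matrix.diagonal s * Uᵀ ∧
      ∀ i, s i ∈ spectrum ℝ B := by
  refine ⟨hB.eigenvectorUnitary, hB.eigenvalues, ?_, ?_, ?_,
    fun i => hB.eigenvalues_mem_spectrum_real i⟩
  · have h := Unitary.coe_star_mul_self hB.eigenvectorUnitary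
    rwa [Matrix.star_eq_conjTranspose, Matrix.conjTranspose_eq_transpose_of_trivial] at h
  · have h := Unitary.coe_mul_star_self hB.eigenvectorUnitary
    rwa [Unitary.coe_star, Matrix.star_eq_conjTranspose,
      Matrix.conjTranspose_eq_transpose_of_trivial] at h
  · have h := hB.spectral_theorem
    rw [Unitary.conjStarAlgAut_apply, Matrix.star_eq_conjTranspose,
      Matrix.conjTranspose_eq_transpose_of_trivial] at h
    exact h

lemma spectrum_exists_eigen {M : Matrix (Fin d) (Fin d) ℝ} {μ : ℝ}
    (h : μ ∈ spectrum ℝ M) : ∃ v : Fin d → ℝ, v ≠ 0 ∧ M *ᵥ v = μ • v := by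
  rw [spectrum.mem_iff] at h
  have halg : (algebraMap ℝ (Matrix (Fin d) (Fin d) ℝ)) μ = μ • (1 : Matrix (Fin d) (Fin d) ℝ) := by
    rw [Matrix.smul_one_eq_diagonal]; rfl
  have hdet : ((algebraMap ℝ (Matrix (Fin d) (Fin d) ℝ)) μ - M).det = 0 := by
    by_contra hne
    exact h ((Matrix.isUnit_iff_isUnit_det _).mpr (isUnit_iff_ne_zero.mpr hne))
  obtain ⟨v, hv0, hv⟩ := Matrix.exists_mulVec_eq_zero_iff.mpr hdet
  refine ⟨v, hv0, ?_⟩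
  rw [halg, Matrix.sub_mulVec] at hv
  have : (μ • (1 : Matrix (Fin d) (Fin d) ℝ)) *ᵥ v = μ • v := by
    rw [Matrix.smul_mulVec, Matrix.one_mulVec]
  rw [this] at hv
  linear_combination (norm := module) -hv

lemma eigen_mem_spectrum {M : Matrix (Fin d) (Fin d) ℝ} {μ : ℝ} {v : Fin d → ℝ}
    (hv0 : v ≠ 0) (hv : M *ᵥ v = μ • v) : μ ∈ spectrum ℝ M := by
  rw [spectrum.mem_iff]
  intro hunit
  have halg : (algebraMap ℝ (Matrix (Fin d) (Fin d) ℝ)) μ = μ • (1 : Matrix (Fin d) (Fin d) ℝ) := by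
    rw [Matrix.smul_one_eq_diagonal]; rfl
  have hker : ((algebraMap ℝ (Matrix (Fin d) (Fin d) ℝ)) μ - M) *ᵥ v = 0 := by
    rw [Matrix.sub_mulVec, halg, Matrix.smul_mulVec, Matrix.one_mulVec, hv]
    simp
  have hdet : ((algebraMap ℝ (Matrix (Fin d) (Fin d) ℝ)) μ - M).det = 0 :=
    Matrix.exists_mulVec_eq_zero_iff.mp ⟨v, hv0, hker⟩
  rw [Matrix.isUnit_iff_isUnit_det, hdet] at hunit
  exact (isUnit_iff_ne_zero.mp hunit) rfl

lemma dot_self_pos {v : Fin d → ℝ} (hv : v ≠ 0) : 0 < v ⬝ᵥ v := by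
  rcases eq_or_lt_of_le (l2_nonneg v) with h0 | h0
  · exact absurd (l2_eq_zero h0.symm) hv
  · rw [dot_self_eq_l2_sq]; positivity

end Spectral

section SpectralTransfer

variable {m n : ℕ} (A : Matrix (Fin m) (Fin n) ℝ)

lemma spec_transfer {μ : ℝ} (h : μ ∈ spectrum ℝ (Aᵀ * A)) (h0 : μ ≠ 0) :
    μ ∈ spectrum ℝ (A * Aᵀ) := by
  obtain ⟨v, hv0, hv⟩ := spectrum_exists_eigen h
  have hw : (A * Aᵀ) *ᵥ (A *ᵥ v) = μ • (A *ᵥ v) := by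
    rw [Matrix.mulVec_mulVec, Matrix.mul_assoc, ← Matrix.mulVec_mulVec (v := v) A (Aᵀ * A), hv,
      Matrix.mulVec_smul]
  have hAv0 : A *ᵥ v ≠ 0 := by
    intro hAv
    have : (Aᵀ * A) *ᵥ v = 0 := by
      rw [← Matrix.mulVec_mulVec, hAv, Matrix.mulVec_zero]
    rw [hv] at this
    have : v = 0 := by
      have := congrArg (fun z => μ⁻¹ • z) this
      simpa [smul_smul, inv_mul_cancel₀ h0] using this
    exact hv0 this
  exact eigen_mem_spectrum hAv0 hw

end SpectralTransfer

section ConjAlgebra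

variable {d : ℕ} {U : Matrix (Fin d) (Fin d) ℝ}

lemma cjd_mul (hUl : Uᵀ * U = 1) (c c' : Fin d → ℝ) :
    (U * Matrix.diagonal c * Uᵀ) * (U * Matrix.diagonal c' * Uᵀ)
      = U * Matrix.diagonal (fun i => c i * c' i) * Uᵀ := by
  have h : Uᵀ * (U * (Matrix.diagonal c' * Uᵀ)) = Matrix.diagonal c' * Uᵀ := by
    rw [← Matrix.mul_assoc, hUl, Matrix.one_mul]
  simp only [Matrix.mul_assoc]
  rw [h, ← Matrix.mul_assoc (Matrix.diagonal c) (Matrix.diagonal c') Uᵀ,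
    Matrix.diagonal_mul_diagonal]

lemma cjd_smul_one (hUr : U * Uᵀ = 1) (r : ℝ) :
    r • (1 : Matrix (Fin d) (Fin d) ℝ) = U * Matrix.diagonal (fun _ => r) * Uᵀ := by
  rw [← Matrix.smul_one_eq_diagonal, mul_smul_comm, Matrix.mul_one, smul_mul_assoc, hUr]

lemma cjd_smul (r : ℝ) (c : Fin d → ℝ) :
    U * Matrix.diagonal (fun i => r * c i) * Uᵀ = r • (U * Matrix.diagonal c * Uᵀ) := by
  have h : (fun i => r * c i) = r • c := by funext i; simp
  rw [h, Matrix.diagonal_smul, mul_smul_comm, smul_mul_assoc]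

lemma cjd_add (c c' : Fin d → ℝ) :
    U * Matrix.diagonal c * Uᵀ + U * Matrix.diagonal c' * Uᵀ
      = U * Matrix.diagonal (fun i => c i + c' i) * Uᵀ := by
  rw [← Matrix.add_mul, ← Matrix.mul_add, Matrix.diagonal_add]

lemma cjd_sub (c c' : Fin d → ℝ) :
    U * Matrix.diagonal c * Uᵀ - U * Matrix.diagonal c' * Uᵀ
      = U * Matrix.diagonal (fun i => c i - c' i) * Uᵀ := by
  rw [← Matrix.sub_mul, ← Matrix.mul_sub, Matrix.diagonal_sub]

lemma cjd_inv_facts (hUl : Uᵀ * U = 1) (hUr : U * Uᵀ = 1)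
    {P : Matrix (Fin d) (Fin d) ℝ} {s : Fin d → ℝ}
    (hP : P = U * Matrix.diagonal s * Uᵀ) (hne : ∀ i, s i ≠ 0) :
    P⁻¹ = U * Matrix.diagonal (fun i => (s i)⁻¹) * Uᵀ ∧ P * P⁻¹ = 1 ∧ P⁻¹ * P = 1 := by
  have hdiag1 : (fun i => s i * (s i)⁻¹) = fun _ : Fin d => (1:ℝ) := by
    funext i; exact mul_inv_cancel₀ (hne i)
  have hdiag2 : (fun i => (s i)⁻¹ * s i) = fun _ : Fin d => (1:ℝ) := by
    funext i; exact inv_mul_cancel₀ (hne i)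
  have hright : P * (U * Matrix.diagonal (fun i => (s i)⁻¹) * Uᵀ) = 1 := by
    rw [hP, cjd_mul hUl, hdiag1, Matrix.diagonal_one, Matrix.mul_one, hUr]
  have hinv : P⁻¹ = U * Matrix.diagonal (fun i => (s i)⁻¹) * Uᵀ :=
    Matrix.inv_eq_right_inv hright
  refine ⟨hinv, by rw [hinv]; exact hright, ?_⟩
  rw [hinv, hP, cjd_mul hUl, hdiag2, Matrix.diagonal_one, Matrix.mul_one, hUr]

end ConjAlgebra

section MainBounds

variable {m n : ℕ} (A : Matrix (Fin m) (Fin n) ℝ)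

lemma herm_AAt : (A * Aᵀ).IsHermitian := by
  have h := Matrix.isHermitian_mul_conjTranspose_self A
  rwa [Matrix.conjTranspose_eq_transpose_of_trivial] at h

lemma herm_AtA : (Aᵀ * A).IsHermitian := by
  have h := Matrix.isHermitian_conjTranspose_mul_self A
  rwa [Matrix.conjTranspose_eq_transpose_of_trivial] at h

lemma At_norm_le {σ1 : ℝ} (hσ1 : 0 ≤ σ1)
    (hmax : ∀ μ ∈ spectrum ℝ (A * Aᵀ), μ ≤ σ1 ^ 2) (w : Fin m → ℝ) :
    l2 (Aᵀ *ᵥ w) ≤ σ1 * l2 w := by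
  obtain ⟨U, s, hUl, hUr, hdec, hspec⟩ := herm_decomp (herm_AAt A)
  have hUt : Uᵀᵀ * Uᵀ = 1 := by rw [Matrix.transpose_transpose, hUr]
  have hquad : l2 (Aᵀ *ᵥ w) ^ 2 = w ⬝ᵥ ((A * Aᵀ) *ᵥ w) := by
    rw [← dot_self_eq_l2_sq, dotProduct_mulVec, Matrix.vecMul_transpose,
      Matrix.mulVec_mulVec, dotProduct_comm]
  apply le_of_sq_le_sq' (l2_nonneg _) (mul_nonneg hσ1 (l2_nonneg _))
  rw [hquad, hdec, dot_cjd_mulVec]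
  have hw' : l2 (Uᵀ *ᵥ w) = l2 w := l2_orth hUt w
  calc ∑ i, s i * (Uᵀ *ᵥ w) i ^ 2 ≤ ∑ i, σ1 ^ 2 * (Uᵀ *ᵥ w) i ^ 2 := by
        apply Finset.sum_le_sum
        intro i _
        exact mul_le_mul_of_nonneg_right (hmax _ (hspec i)) (sq_nonneg _)
    _ = σ1 ^ 2 * l2 (Uᵀ *ᵥ w) ^ 2 := by rw [l2_sq, Finset.mul_sum]
    _ = (σ1 * l2 w) ^ 2 := by rw [hw']; ring

lemma N_facts {σm ε : ℝ} (hσm : 0 ≤ σm) (hε : 0 < ε)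
    (hmin : ∀ μ ∈ spectrum ℝ (A * Aᵀ), σm ^ 2 ≤ μ) :
    (A * Aᵀ + ε • 1) * (A * Aᵀ + ε • 1)⁻¹ = 1 ∧
    ∀ e : Fin m → ℝ, l2 ((A * Aᵀ + ε • 1)⁻¹ *ᵥ e) ≤ (σm ^ 2 + ε)⁻¹ * l2 e := by
  obtain ⟨U, s, hUl, hUr, hdec, hspec⟩ := herm_decomp (herm_AAt A)
  have hsge : ∀ i, σm ^ 2 ≤ s i := fun i => hmin _ (hspec i)
  have hpos : ∀ i, 0 < s i + ε := fun i => by nlinarith [hsge i, sq_nonneg σm]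
  have hBd : A * Aᵀ + ε • 1 = U * Matrix.diagonal (fun i => s i + ε) * Uᵀ := by
    rw [hdec, cjd_smul_one hUr ε, cjd_add]
  obtain ⟨hinv, hri, hli⟩ := cjd_inv_facts hUl hUr hBd (fun i => ne_of_gt (hpos i))
  refine ⟨hri, fun e => ?_⟩
  rw [hinv]
  apply l2_cjd_mulVec_le hUl hUr _ (by positivity)
  intro i
  rw [abs_of_pos (inv_pos.mpr (hpos i))]
  have h1 : 0 < σm ^ 2 + ε := by positivity
  exact inv_anti₀ h1 (by nlinarith [hsge i])

lemma scalar_f_bound {σ1 σm ε lam sv : ℝ} (hσ1 : 0 ≤ σ1) (hε : 0 < ε)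
    (hlam0 : 0 < lam) (hlam : lam ≤ σm ^ 2 + ε) (hms : σm ^ 2 ≤ σ1 ^ 2)
    (hsv : sv = 0 ∨ (σm ^ 2 ≤ sv ∧ sv ≤ σ1 ^ 2)) :
    |sv - lam + lam * ε * (sv + ε)⁻¹| ≤ σ1 ^ 2 - lam * σ1 ^ 2 / (σ1 ^ 2 + ε) := by
  have hde : (0:ℝ) < σ1 ^ 2 + ε := by positivity
  have ht0 : 0 ≤ σ1 ^ 2 - lam * σ1 ^ 2 / (σ1 ^ 2 + ε) := by
    rw [sub_nonneg, div_le_iff₀ hde]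
    nlinarith [sq_nonneg σm]
  rcases hsv with h0 | ⟨hlo, hhi⟩
  · subst h0
    have : (0:ℝ) - lam + lam * ε * (0 + ε)⁻¹ = 0 := by
      field_simp
      ring
    rw [this, abs_zero]
    exact ht0
  · have hsp : (0:ℝ) < sv + ε := by nlinarith [sq_nonneg σm]
    have hval : sv - lam + lam * ε * (sv + ε)⁻¹ = sv * (sv + ε - lam) / (sv + ε) := by
      field_simp
      ring
    have hf0 : 0 ≤ sv - lam + lam * ε * (sv + ε)⁻¹ := by
      rw [hval]
      apply div_nonneg _ (le_of_lt hsp)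
      apply mul_nonneg (by nlinarith [sq_nonneg σm])
      nlinarith
    rw [abs_of_nonneg hf0, hval]
    rw [div_le_iff₀ hsp]
    have hrhs : σ1 ^ 2 - lam * σ1 ^ 2 / (σ1 ^ 2 + ε) = σ1 ^ 2 * (σ1 ^ 2 + ε - lam) / (σ1 ^ 2 + ε) := by
      field_simp
    rw [hrhs, div_mul_eq_mul_div, le_div_iff₀ hde]
    -- (sv (sv+ε−lam)) (σ1²+ε) ≤ σ1²(σ1²+ε−lam)(sv+ε)
    nlinarith [mul_nonneg (sub_nonneg.mpr hhi)
        (sub_nonneg.mpr (show lam * ε ≤ (σ1 ^ 2 + ε) * (sv + ε) by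
          nlinarith [sq_nonneg σm, sq_nonneg σ1])),
      mul_nonneg (sub_nonneg.mpr hlo) (le_of_lt hε), sq_nonneg σm]

lemma G_facts {σ1 σm ε lam : ℝ} (hσ1 : 0 ≤ σ1) (hσm : 0 ≤ σm) (hε : 0 < ε)
    (hlam0 : 0 < lam) (hlam : lam ≤ σm ^ 2 + ε)
    (hσmmem : σm ^ 2 ∈ spectrum ℝ (A * Aᵀ))
    (hmax : ∀ μ ∈ spectrum ℝ (A * Aᵀ), μ ≤ σ1 ^ 2)
    (hmin : ∀ μ ∈ spectrum ℝ (A * Aᵀ), σm ^ 2 ≤ μ) :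
    (Aᵀ * A + ε • 1)⁻¹ * (Aᵀ * A + ε • 1) = 1 ∧
    ∀ v : Fin n → ℝ,
      l2 ((Aᵀ * A - lam • 1 + (lam * ε) • (Aᵀ * A + ε • 1)⁻¹) *ᵥ v)
        ≤ (σ1 ^ 2 - lam * σ1 ^ 2 / (σ1 ^ 2 + ε)) * l2 v := by
  have hms : σm ^ 2 ≤ σ1 ^ 2 := hmax _ hσmmem
  obtain ⟨U, s, hUl, hUr, hdec, hspec⟩ := herm_decomp (herm_AtA A)
  have hloc : ∀ i, s i = 0 ∨ (σm ^ 2 ≤ s i ∧ s i ≤ σ1 ^ 2) := by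
    intro i
    by_cases h0 : s i = 0
    · exact Or.inl h0
    · right
      have hmem := spec_transfer A (hspec i) h0
      exact ⟨hmin _ hmem, hmax _ hmem⟩
  have hpos : ∀ i, 0 < s i + ε := by
    intro i
    rcases hloc i with h0 | ⟨hlo, _⟩
    · rw [h0]; linarith
    · nlinarith [sq_nonneg σm]
  have hGd : Aᵀ * A + ε • 1 = U * Matrix.diagonal (fun i => s i + ε) * Uᵀ := by
    rw [hdec, cjd_smul_one hUr ε, cjd_add]
  obtain ⟨hinv, hri, hli⟩ := cjd_inv_facts hUl hUr hGd (fun i => ne_of_gt (hpos i))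
  refine ⟨hli, fun v => ?_⟩
  have hCd : Aᵀ * A - lam • 1 + (lam * ε) • (Aᵀ * A + ε • 1)⁻¹
      = U * Matrix.diagonal (fun i => s i - lam + lam * ε * (s i + ε)⁻¹) * Uᵀ := by
    rw [hinv, hdec, cjd_smul_one hUr lam, cjd_sub, ← cjd_smul (lam * ε), cjd_add]
  rw [hCd]
  have hde : (0:ℝ) < σ1 ^ 2 + ε := by positivity
  have ht0 : 0 ≤ σ1 ^ 2 - lam * σ1 ^ 2 / (σ1 ^ 2 + ε) := by
    rw [sub_nonneg, div_le_iff₀ hde]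
    nlinarith [sq_nonneg σm]
  apply l2_cjd_mulVec_le hUl hUr _ ht0
  intro i
  exact scalar_f_bound hσ1 hε hlam0 hlam hms (hloc i)

end MainBounds

lemma max_zero_sub_sq_le {a b : ℝ} (hb : 0 ≤ b) : (max a 0 - b) ^ 2 ≤ (a - b) ^ 2 := by
  rcases le_total a 0 with h | h
  · rw [max_eq_right h]
    nlinarith
  · rw [max_eq_left h]

lemma l2_ite_le {d : ℕ} (F : Finset (Fin d)) (p : Fin d → ℝ) :
    l2 (fun i => if i ∈ F then p i else 0) ≤ l2 p := by
  apply l2_mono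
  intro i
  by_cases hi : i ∈ F <;> simp [hi, sq_nonneg]

/-- One NDRT iteration: if `y = Ax + e` with `x` nonnegative and `k`-sparse, `x⁽ᵖ⁾` is
`k`-sparse, `u = x⁽ᵖ⁾ + λ(AᵀA + εI)⁻¹Aᵀ(y - Ax⁽ᵖ⁾)`, and `x⁽ᵖ⁺¹⁾ = H_k(u⁺)` (hard
thresholding of the positive part of `u`, realized by an index set `T` of `k`
largest-in-magnitude entries of `u⁺`), then
`‖x⁽ᵖ⁺¹⁾ - x‖₂ ≤ α ‖x⁽ᵖ⁾ - x‖₂ + γ ‖e‖₂` with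
`α = φ(δ₃ₖ + σ₁² - λσ₁²/(σ₁² + ε))` and `γ = φλσ₁/(σ_m² + ε)`. -/
theorem stmt10 {m n k : ℕ} (hmn : m ≤ n) (A : Matrix (Fin m) (Fin n) ℝ)
    (x : Fin n → ℝ) (e y : Fin m → ℝ) (hy : y = A *ᵥ x + e)
    (hx0 : ∀ i, 0 ≤ x i) (hxs : (Function.support x).ncard ≤ k)
    (σ1 σm ε lam : ℝ) (hσ1 : 0 ≤ σ1) (hσm : 0 ≤ σm)
    (hσ1mem : σ1 ^ 2 ∈ spectrum ℝ (A * Aᵀ))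
    (hσ1max : ∀ μ ∈ spectrum ℝ (A * Aᵀ), μ ≤ σ1 ^ 2)
    (hσmmem : σm ^ 2 ∈ spectrum ℝ (A * Aᵀ))
    (hσmmin : ∀ μ ∈ spectrum ℝ (A * Aᵀ), σm ^ 2 ≤ μ)
    (hε : 0 < ε) (hlam0 : 0 < lam) (hlam : lam ≤ σm ^ 2 + ε)
    (xp : Fin n → ℝ) (hxps : (Function.support xp).ncard ≤ k)
    (u : Fin n → ℝ)
    (hu : u = xp + lam • ((Aᵀ * A + ε • 1)⁻¹ *ᵥ (Aᵀ *ᵥ (y - A *ᵥ xp))))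
    (T : Set (Fin n)) (hTcard : T.ncard = min k n)
    (hT : ∀ i ∈ T, ∀ j ∉ T, |max (u j) 0| ≤ |max (u i) 0|)
    (xnext : Fin n → ℝ) (hxnext : xnext = T.indicator fun i => max (u i) 0) :
    l2 (xnext - x) ≤
      (Real.sqrt 5 + 1) / 2 * (RIC A (3 * k) + σ1 ^ 2 - lam * σ1 ^ 2 / (σ1 ^ 2 + ε)) *
        l2 (xp - x)
      + (Real.sqrt 5 + 1) / 2 * lam * σ1 / (σm ^ 2 + ε) * l2 e := by
  classical
  obtain ⟨hNr, hNbound⟩ := N_facts A hσm hε hσmmin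
  obtain ⟨hMl, hCbound⟩ := G_facts A hσ1 hσm hε hlam0 hlam hσmmem hσ1max hσmmin
  -- commutation identity
  have hcomm : (Aᵀ * A + ε • 1) * Aᵀ = Aᵀ * (A * Aᵀ + ε • 1) := by
    rw [Matrix.add_mul, Matrix.mul_add, Matrix.mul_assoc]
    congr 1
    rw [Matrix.smul_mul, Matrix.one_mul, Matrix.mul_smul, Matrix.mul_one]
  have hMA : (Aᵀ * A + ε • 1)⁻¹ * Aᵀ = Aᵀ * (A * Aᵀ + ε • 1)⁻¹ := by
    calc (Aᵀ * A + ε • 1)⁻¹ * Aᵀ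
        = (Aᵀ * A + ε • 1)⁻¹ * Aᵀ * ((A * Aᵀ + ε • 1) * (A * Aᵀ + ε • 1)⁻¹) := by
          rw [hNr, Matrix.mul_one]
      _ = (Aᵀ * A + ε • 1)⁻¹ * (Aᵀ * (A * Aᵀ + ε • 1)) * (A * Aᵀ + ε • 1)⁻¹ := by
          simp only [Matrix.mul_assoc]
      _ = (Aᵀ * A + ε • 1)⁻¹ * ((Aᵀ * A + ε • 1) * Aᵀ) * (A * Aᵀ + ε • 1)⁻¹ := by
          rw [hcomm]
      _ = ((Aᵀ * A + ε • 1)⁻¹ * (Aᵀ * A + ε • 1)) * (Aᵀ * (A * Aᵀ + ε • 1)⁻¹) := by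
          simp only [Matrix.mul_assoc]
      _ = Aᵀ * (A * Aᵀ + ε • 1)⁻¹ := by rw [hMl, Matrix.one_mul]
  have hMAe : ∀ e' : Fin m → ℝ, (Aᵀ * A + ε • 1)⁻¹ *ᵥ (Aᵀ *ᵥ e')
      = Aᵀ *ᵥ ((A * Aᵀ + ε • 1)⁻¹ *ᵥ e') := by
    intro e'
    rw [Matrix.mulVec_mulVec, hMA, ← Matrix.mulVec_mulVec]
  have hyv : y - A *ᵥ xp = e - A *ᵥ (xp - x) := by
    rw [hy, Matrix.mulVec_sub]
    abel
  have hMid : (Aᵀ * A + ε • 1)⁻¹ *ᵥ ((Aᵀ * A) *ᵥ (xp - x))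
      + ε • ((Aᵀ * A + ε • 1)⁻¹ *ᵥ (xp - x)) = (xp - x) := by
    have h1 : ((Aᵀ * A + ε • 1)⁻¹ * (Aᵀ * A + ε • 1)) *ᵥ (xp - x) = xp - x := by
      rw [hMl, Matrix.one_mulVec]
    rw [← Matrix.mulVec_mulVec, Matrix.add_mulVec, Matrix.smul_mulVec,
      Matrix.one_mulVec, Matrix.mulVec_add, Matrix.mulVec_smul] at h1
    exact h1
  have h_ux : u - x = ((xp - x) - (Aᵀ * A) *ᵥ (xp - x))
      + ((Aᵀ * A - lam • 1 + (lam * ε) • (Aᵀ * A + ε • 1)⁻¹) *ᵥ (xp - x))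
      + lam • (Aᵀ *ᵥ ((A * Aᵀ + ε • 1)⁻¹ *ᵥ e)) := by
    rw [hu, hyv, Matrix.mulVec_sub, Matrix.mulVec_mulVec, Matrix.mulVec_sub, hMAe,
      Matrix.add_mulVec, Matrix.sub_mulVec, Matrix.smul_mulVec, Matrix.one_mulVec,
      Matrix.smul_mulVec]
    linear_combination (norm := module) (-lam) • hMid
  -- finsets
  have hTfin : T.Finite := Set.toFinite T
  have hSfin : (Function.support x).Finite := Set.toFinite _
  set FT : Finset (Fin n) := hTfin.toFinset with hFTdef
  set FS : Finset (Fin n) := hSfin.toFinset with hFSdef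
  have hmemFT : ∀ i, i ∈ FT ↔ i ∈ T := fun i => hTfin.mem_toFinset
  have hmemFS : ∀ i, i ∈ FS ↔ i ∈ Function.support x := fun i => hSfin.mem_toFinset
  set w : Fin n → ℝ := fun i => max (u i) 0 with hwdef
  have hxnext' : xnext = fun i => if i ∈ FT then w i else 0 := by
    rw [hxnext]
    funext i
    rw [Set.indicator_apply]
    by_cases hi : i ∈ T
    · rw [if_pos hi, if_pos ((hmemFT i).mpr hi)]
    · rw [if_neg hi, if_neg (fun h => hi ((hmemFT i).mp h))]
  -- golden ratio step
  have hgold : l2 (xnext - x) ≤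
      (Real.sqrt 5 + 1) / 2 * l2 (fun i => if i ∈ FT ∪ FS then w i - x i else 0) := by
    rw [hxnext']
    apply golden_aux
    · intro i hi
      by_contra hxi
      exact hi ((hmemFS i).mpr hxi)
    · have hFT : FT.card = min k n := by
        rw [← Set.ncard_eq_toFinset_card T hTfin, hTcard]
      have hFS : FS.card ≤ k := by
        rw [← Set.ncard_eq_toFinset_card _ hSfin]
        exact hxs
      have hFSn : FS.card ≤ n := le_trans (Finset.card_le_univ FS) (by simp)
      have h1 := Finset.card_sdiff_add_card_inter FS FT
      have h2 := Finset.card_sdiff_add_card_inter FT FS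
      have h3 : (FS ∩ FT).card = (FT ∩ FS).card := by rw [Finset.inter_comm]
      omega
    · intro i hi j hj
      exact hT i ((hmemFT i).mp hi) j (fun h => hj ((hmemFT j).mpr h))
  -- pointwise positive-part bound
  have hpoint : l2 (fun i => if i ∈ FT ∪ FS then w i - x i else 0)
      ≤ l2 (fun i => if i ∈ FT ∪ FS then (u - x) i else 0) := by
    apply l2_mono
    intro i
    by_cases hi : i ∈ FT ∪ FS
    · simp only [hi, if_true, Pi.sub_apply]
      exact max_zero_sub_sq_le (hx0 i)
    · simp [hi]
  -- split into three parts
  set p1 : Fin n → ℝ := (xp - x) - (Aᵀ * A) *ᵥ (xp - x) with hp1def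
  set p2 : Fin n → ℝ := (Aᵀ * A - lam • 1 + (lam * ε) • (Aᵀ * A + ε • 1)⁻¹) *ᵥ (xp - x)
    with hp2def
  set p3 : Fin n → ℝ := lam • (Aᵀ *ᵥ ((A * Aᵀ + ε • 1)⁻¹ *ᵥ e)) with hp3def
  have hsplit : (fun i => if i ∈ FT ∪ FS then (u - x) i else 0)
      = (fun i => if i ∈ FT ∪ FS then p1 i else 0) + (fun i => if i ∈ FT ∪ FS then p2 i else 0)
        + (fun i => if i ∈ FT ∪ FS then p3 i else 0) := by
    funext i
    by_cases hi : i ∈ FT ∪ FS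
    · simp only [Pi.add_apply, hi, if_true]
      rw [h_ux]
      simp
    · simp only [Pi.add_apply, if_neg hi, add_zero]
  have htri : l2 (fun i => if i ∈ FT ∪ FS then (u - x) i else 0)
      ≤ l2 (fun i => if i ∈ FT ∪ FS then p1 i else 0)
        + l2 (fun i => if i ∈ FT ∪ FS then p2 i else 0)
        + l2 (fun i => if i ∈ FT ∪ FS then p3 i else 0) := by
    rw [hsplit]
    calc l2 (_ + _ + _) ≤ l2 (_ + _) + l2 _ := l2_triangle _ _
      _ ≤ l2 _ + l2 _ + l2 _ := by
          have := l2_triangle (fun i => if i ∈ FT ∪ FS then p1 i else 0)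
            (fun i => if i ∈ FT ∪ FS then p2 i else 0)
          linarith
  -- term 1 : RIP
  have hterm1 : l2 (fun i => if i ∈ FT ∪ FS then p1 i else 0)
      ≤ RIC A (3 * k) * l2 (xp - x) := by
    have hset : (fun i => if i ∈ FT ∪ FS then p1 i else 0)
        = (↑(FT ∪ FS) : Set (Fin n)).indicator ((xp - x) - Aᵀ *ᵥ (A *ᵥ (xp - x))) := by
      funext i
      rw [Set.indicator_apply, Matrix.mulVec_mulVec]
      by_cases hi : i ∈ FT ∪ FS
      · rw [if_pos hi, if_pos (Finset.mem_coe.mpr hi)]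
      · rw [if_neg hi, if_neg (fun h => hi (Finset.mem_coe.mp h))]
    rw [hset]
    apply rip_bound
    have hsub : (↑(FT ∪ FS) : Set (Fin n)) ∪ Function.support (xp - x)
        ⊆ T ∪ Function.support x ∪ Function.support xp := by
      intro i hi
      rcases hi with hi | hi
      · rw [Finset.coe_union] at hi
        rcases hi with hi | hi
        · exact Or.inl (Or.inl ((hmemFT i).mp (Finset.mem_coe.mp hi)))
        · exact Or.inl (Or.inr ((hmemFS i).mp (Finset.mem_coe.mp hi)))
      · have := Function.support_sub xp x hi
        rcases this with h | h
        · exact Or.inr h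
        · exact Or.inl (Or.inr h)
    calc ((↑(FT ∪ FS) : Set (Fin n)) ∪ Function.support (xp - x)).ncard
        ≤ (T ∪ Function.support x ∪ Function.support xp).ncard :=
          Set.ncard_le_ncard hsub (Set.toFinite _)
      _ ≤ (T ∪ Function.support x).ncard + (Function.support xp).ncard :=
          Set.ncard_union_le _ _
      _ ≤ T.ncard + (Function.support x).ncard + (Function.support xp).ncard := by
          have := Set.ncard_union_le T (Function.support x)
          omega
      _ ≤ 3 * k := by
          rw [hTcard]
          have : min k n ≤ k := min_le_left _ _
          omega
  -- term 2 : spectral C bound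
  have hterm2 : l2 (fun i => if i ∈ FT ∪ FS then p2 i else 0)
      ≤ (σ1 ^ 2 - lam * σ1 ^ 2 / (σ1 ^ 2 + ε)) * l2 (xp - x) :=
    le_trans (l2_ite_le _ _) (hCbound (xp - x))
  -- term 3 : error term
  have hterm3 : l2 (fun i => if i ∈ FT ∪ FS then p3 i else 0)
      ≤ lam * σ1 * (σm ^ 2 + ε)⁻¹ * l2 e := by
    apply le_trans (l2_ite_le _ _)
    rw [hp3def, l2_smul, abs_of_pos hlam0]
    have h1 : l2 (Aᵀ *ᵥ ((A * Aᵀ + ε • 1)⁻¹ *ᵥ e)) ≤ σ1 * l2 ((A * Aᵀ + ε • 1)⁻¹ *ᵥ e) :=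
      At_norm_le A hσ1 hσ1max _
    have h2 : l2 ((A * Aᵀ + ε • 1)⁻¹ *ᵥ e) ≤ (σm ^ 2 + ε)⁻¹ * l2 e := hNbound e
    have h3 : σ1 * l2 ((A * Aᵀ + ε • 1)⁻¹ *ᵥ e) ≤ σ1 * ((σm ^ 2 + ε)⁻¹ * l2 e) :=
      mul_le_mul_of_nonneg_left h2 hσ1
    calc lam * l2 (Aᵀ *ᵥ ((A * Aᵀ + ε • 1)⁻¹ *ᵥ e))
        ≤ lam * (σ1 * ((σm ^ 2 + ε)⁻¹ * l2 e)) := by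
          apply mul_le_mul_of_nonneg_left _ (le_of_lt hlam0)
          linarith
      _ = lam * σ1 * (σm ^ 2 + ε)⁻¹ * l2 e := by ring
  -- combine
  have hφ : (0:ℝ) ≤ (Real.sqrt 5 + 1) / 2 := by positivity
  have hfinal : l2 (xnext - x) ≤ (Real.sqrt 5 + 1) / 2 *
      (RIC A (3 * k) * l2 (xp - x) + (σ1 ^ 2 - lam * σ1 ^ 2 / (σ1 ^ 2 + ε)) * l2 (xp - x)
        + lam * σ1 * (σm ^ 2 + ε)⁻¹ * l2 e) := by
    apply le_trans hgold
    apply mul_le_mul_of_nonneg_left _ hφ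
    apply le_trans hpoint
    apply le_trans htri
    linarith
  apply le_trans hfinal
  have hne : σm ^ 2 + ε ≠ 0 := by positivity
  rw [div_eq_mul_inv ((Real.sqrt 5 + 1) / 2 * lam * σ1)]
  ring_nf
  apply le_of_eq
  ring
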